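/- Let G be a finite simple graph with n vertices and m edges, and let v be a vertex of G. Suppose G contains a spanning subgraph G' in which v is adjacent to every other vertex and every vertex has degree at least 2 in G'. Let Δ be the maximum degree in G' among vertices different from v. Then G' contains a matching of size at least ⌊n/2⌋ / (2Δ − 1) consisting of edges not incident to v. -/

import Mathlib

/-!
The edges of `G'` avoiding `v` form the graph `H = G'.deleteIncidenceSet v`. Every `u ≠ v` has
a neighbour other than `v`, so it has positive degree in `H` and the handshake lemma gives
`n - 1 ≤ 2 |E(H)|`. Take a maximal matching `M` of `H`: every edge of `H` meets one of the at most
`2 |M|` matched vertices, each of which has degree at most `Δ - 1` in `H`, so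
`|E(H)| ≤ 2 (Δ - 1) |M|`.
-/

open Finset

theorem Finset.exists_maximal_pairwiseDisjoint {ι α : Type*} [PartialOrder α] [OrderBot α]
    (S : Finset ι) (t : ι → α) (ht : ∀ e ∈ S, t e ≠ ⊥) :
    ∃ M ⊆ S, (M : Set ι).PairwiseDisjoint t ∧
      ∀ e ∈ S, ∃ f ∈ M, ¬Disjoint (t e) (t f) := by
  classical
  obtain ⟨M, hM, hmax⟩ :=
    (S.powerset.filter fun M : Finset ι => (M : Set ι).PairwiseDisjoint t).exists_maximal
      ⟨∅, by simp⟩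
  simp only [mem_filter, mem_powerset] at hM hmax
  obtain ⟨hMS, hMdisj⟩ := hM
  refine ⟨M, hMS, hMdisj, fun e he => ?_⟩
  by_contra! hfree
  have hinsert : insert e M ⊆ M :=
    hmax ⟨insert_subset he hMS, by simpa using hMdisj.insert fun f hf _ => hfree f hf⟩
      (subset_insert e M)
  exact ht e he (disjoint_self.mp (hfree e (hinsert (mem_insert_self e M))))

namespace SimpleGraph

variable {V : Type*} [Fintype V]

theorem card_le_two_mul_card_edgeFinset_of_degree_pos (G : SimpleGraph V) [DecidableRel G.Adj]
    (s : Finset V) (hs : ∀ u ∈ s, 0 < G.degree u) : #s ≤ 2 * #G.edgeFinset :=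
  calc #s = ∑ _u ∈ s, 1 := by simp
    _ ≤ ∑ u ∈ s, G.degree u := sum_le_sum hs
    _ ≤ ∑ u, G.degree u := sum_le_univ_sum_of_nonneg fun _ => Nat.zero_le _
    _ = 2 * #G.edgeFinset := G.sum_degrees_eq_twice_card_edges

variable [DecidableEq V]

theorem card_biUnion_incidenceFinset_le (G : SimpleGraph V) [DecidableRel G.Adj] (e : Sym2 V) :
    #(e.toFinset.biUnion fun x => G.incidenceFinset x) ≤ 2 * G.maxDegree :=
  calc #(e.toFinset.biUnion fun x => G.incidenceFinset x)
        ≤ ∑ x ∈ e.toFinset, #(G.incidenceFinset x) := card_biUnion_le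
    _ ≤ ∑ _x ∈ e.toFinset, G.maxDegree := sum_le_sum fun x _ => by
        rw [card_incidenceFinset_eq_degree]; exact G.degree_le_maxDegree x
    _ = #e.toFinset * G.maxDegree := by rw [sum_const, smul_eq_mul]
    _ ≤ 2 * G.maxDegree := by
        gcongr; rw [Sym2.card_toFinset]; split_ifs <;> omega

theorem exists_pairwiseDisjoint_card_edgeFinset_le (G : SimpleGraph V) [DecidableRel G.Adj] :
    ∃ M ⊆ G.edgeFinset, (M : Set (Sym2 V)).PairwiseDisjoint Sym2.toFinset ∧
      #G.edgeFinset ≤ 2 * G.maxDegree * #M := by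
  obtain ⟨M, hMG, hMdisj, hmeet⟩ := G.edgeFinset.exists_maximal_pairwiseDisjoint Sym2.toFinset
    fun e _ => Sym2.toFinset_ne_empty e
  refine ⟨M, hMG, hMdisj, ?_⟩
  have hcover :
      G.edgeFinset ⊆ M.biUnion fun f => f.toFinset.biUnion fun x => G.incidenceFinset x := by
    intro e he
    obtain ⟨f, hf, hef⟩ := hmeet e he
    obtain ⟨x, hxe, hxf⟩ := not_disjoint_iff.mp hef
    simp only [mem_biUnion, mem_incidenceFinset]
    exact ⟨f, hf, x, hxf, mem_edgeFinset.mp he, Sym2.mem_toFinset.mp hxe⟩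
  calc #G.edgeFinset ≤ ∑ f ∈ M, #(f.toFinset.biUnion fun x => G.incidenceFinset x) :=
        (card_le_card hcover).trans card_biUnion_le
    _ ≤ ∑ _f ∈ M, 2 * G.maxDegree := sum_le_sum fun f _ => G.card_biUnion_incidenceFinset_le f
    _ = 2 * G.maxDegree * #M := by rw [sum_const, smul_eq_mul, mul_comm]

theorem degree_deleteIncidenceSet_self (G : SimpleGraph V) [DecidableRel G.Adj] (v : V) :
    (G.deleteIncidenceSet v).degree v = 0 := by
  simp [← card_neighborFinset_eq_degree, neighborFinset_eq_filter, deleteIncidenceSet_adj]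

theorem degree_deleteIncidenceSet_add_one (G : SimpleGraph V) [DecidableRel G.Adj] {u v : V}
    (huv : G.Adj u v) : (G.deleteIncidenceSet v).degree u + 1 = G.degree u := by
  have hneighbors : (G.deleteIncidenceSet v).neighborFinset u = (G.neighborFinset u).erase v := by
    ext w
    simp [deleteIncidenceSet_adj, huv.ne, and_comm]
  rw [← card_neighborFinset_eq_degree, ← card_neighborFinset_eq_degree, hneighbors,
    card_erase_add_one ((mem_neighborFinset G u v).mpr huv)]

end SimpleGraph

open SimpleGraph in
theorem stmt_9_general {V : Type*} [Fintype V] [DecidableEq V] (n : ℕ)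
    (hcard : Fintype.card V = n)
    (G' : SimpleGraph V) [DecidableRel G'.Adj]
    (v : V)
    (hv : ∀ u : V, u ≠ v → G'.Adj v u)
    (hdeg2 : ∀ u : V, 2 ≤ G'.degree u)
    (Δ : ℕ) (hΔ : ∀ u : V, u ≠ v → G'.degree u ≤ Δ) :
    ∃ M : Finset (Sym2 V), M ⊆ G'.edgeFinset ∧
      (∀ e ∈ M, ∀ f ∈ M, e ≠ f → ∀ x : V, x ∈ e → x ∉ f) ∧
      (∀ e ∈ M, v ∉ e) ∧
      (n / 2) / (2 * Δ - 1) ≤ M.card := by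
  set H := G'.deleteIncidenceSet v
  have hdegH (u : V) (hu : u ≠ v) : H.degree u + 1 = G'.degree u :=
    G'.degree_deleteIncidenceSet_add_one (hv u hu).symm
  have hmaxH : H.maxDegree ≤ Δ - 1 := H.maxDegree_le_of_forall_degree_le _ fun u => by
    by_cases hu : u = v
    · subst hu; simp only [H, degree_deleteIncidenceSet_self, zero_le]
    · have := hdegH u hu; have := hΔ u hu; omega
  have hedges : n - 1 ≤ 2 * #H.edgeFinset := by
    simpa [← hcard] using H.card_le_two_mul_card_edgeFinset_of_degree_pos (univ.erase v)
      fun u hu => by have := hdegH u (ne_of_mem_erase hu); have := hdeg2 u; omega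
  obtain ⟨M, hMH, hMdisj, hMcard⟩ := H.exists_pairwiseDisjoint_card_edgeFinset_le
  rw [edgeFinset_deleteIncidenceSet_eq_filter] at hMH
  refine ⟨M, hMH.trans (filter_subset _ _), fun e he f hf hef x hxe hxf => ?_,
    fun e he => (mem_filter.mp (hMH he)).2, Nat.div_le_of_le_mul ?_⟩
  · exact disjoint_left.mp (hMdisj he hf hef) (Sym2.mem_toFinset.mpr hxe)
      (Sym2.mem_toFinset.mpr hxf)
  · have : 2 * H.maxDegree * #M ≤ (2 * Δ - 1) * #M := by gcongr; omega
    omega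

theorem stmt_9 {V : Type*} [Fintype V] [DecidableEq V] (n : ℕ)
    (hcard : Fintype.card V = n)
    (G G' : SimpleGraph V) [DecidableRel G.Adj] [DecidableRel G'.Adj]
    (hsub : G' ≤ G) (v : V)
    (hv : ∀ u : V, u ≠ v → G'.Adj v u)
    (hdeg2 : ∀ u : V, 2 ≤ G'.degree u)
    (Δ : ℕ) (hΔ : ∀ u : V, u ≠ v → G'.degree u ≤ Δ) :
    ∃ M : Finset (Sym2 V), M ⊆ G'.edgeFinset ∧
      (∀ e ∈ M, ∀ f ∈ M, e ≠ f → ∀ x : V, x ∈ e → x ∉ f) ∧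
      (∀ e ∈ M, v ∉ e) ∧
      (n / 2) / (2 * Δ - 1) ≤ M.card :=
  stmt_9_general n hcard G' v hv hdeg2 Δ hΔ
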